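/- Let e, e' be independent edges of a rooted spanning tree T of a weighted graph G. If w(T_e) ≥ 2·w(T_e, T_{e'}), then the weight of the cut determined by {e, e'} is at least w(T_{e'}), i.e., at least the weight of the cut determined by e' alone. -/

import Mathlib

open Finset

/-- Total weight of graph edges with one endpoint in `A` and the other in `B`
(summed over ordered pairs). -/
def betw {V : Type*} [Fintype V] (w : V → V → ℝ) (A B : Finset V) : ℝ :=
  ∑ u ∈ A, ∑ v ∈ B, w u v

/-- Weight of the cut `(S, V \\ S)`: total weight of edges leaving `S`. -/
def cutw {V : Type*} [Fintype V] [DecidableEq V] (w : V → V → ℝ) (S : Finset V) : ℝ :=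
  betw w S Sᶜ

section Betw

variable {V : Type*} [Fintype V] (w : V → V → ℝ)

lemma betw_union_left [DecidableEq V] {A B : Finset V} (h : Disjoint A B) (C : Finset V) :
    betw w (A ∪ B) C = betw w A C + betw w B C := by
  simp only [betw, sum_union h]

lemma betw_union_right [DecidableEq V] (A : Finset V) {B C : Finset V} (h : Disjoint B C) :
    betw w A (B ∪ C) = betw w A B + betw w A C := by
  simp only [betw, sum_union h, sum_add_distrib]

lemma betw_comm (hsym : ∀ u v, w u v = w v u) (A B : Finset V) :
    betw w A B = betw w B A := by
  rw [betw, sum_comm]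
  simp only [betw, hsym]

lemma cutw_eq_betw_univ_sub [DecidableEq V] (S : Finset V) :
    cutw w S = betw w S univ - betw w S S := by
  rw [cutw, ← union_compl S, betw_union_right w S disjoint_compl_right]
  ring

/-- The edges between `A` and `B` leave each of `A` and `B` but not `A ∪ B`. -/
lemma cutw_union_of_disjoint [DecidableEq V] (hsym : ∀ u v, w u v = w v u)
    {A B : Finset V} (h : Disjoint A B) :
    cutw w (A ∪ B) = cutw w A + cutw w B - 2 * betw w A B := by
  rw [cutw_eq_betw_univ_sub, cutw_eq_betw_univ_sub, cutw_eq_betw_univ_sub,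
    betw_union_left w h, betw_union_left w h, betw_union_right w A h, betw_union_right w B h,
    betw_comm w hsym B A]
  ring

end Betw

theorem stmt_2_general {V : Type*} [Fintype V] [DecidableEq V] (w : V → V → ℝ)
    (hsym : ∀ u v, w u v = w v u)
    (Te Te' : Finset V) (hdisj : Disjoint Te Te')
    (hni : 2 * betw w Te Te' ≤ cutw w Te) :
    cutw w Te' ≤ cutw w (Te ∪ Te') := by
  rw [cutw_union_of_disjoint w hsym hdisj]
  linarith

/-- For independent tree edges `e, e'` (disjoint subtrees `Te, Te'`):
if `w(Te) ≥ 2 w(Te,Te')` (i.e. `e` is not cross-interested in `e'`), then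
the cut determined by {e,e'} weighs at least the cut determined by `e'` alone. -/
theorem stmt_2 {V : Type*} [Fintype V] [DecidableEq V] (w : V → V → ℝ)
    (hsym : ∀ u v, w u v = w v u) (hnn : ∀ u v, 0 ≤ w u v)
    (Te Te' : Finset V) (hdisj : Disjoint Te Te')
    (hni : 2 * betw w Te Te' ≤ cutw w Te) :
    cutw w Te' ≤ cutw w (Te ∪ Te') :=
  stmt_2_general w hsym Te Te' hdisj hni
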